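/- Let ρ̃, σ̃, ρ₂, σ₂ ∈ ℝ and κ̃ ∈ ℝ \ {0}, and set R̃(t) = ρ̃t² + σ̃t + 1. Let y be three times differentiable on an open interval I ⊆ ℝ with y'(x) ≠ 0, y(x) ∉ {0,1}, R̃(y(x)) ≠ 0, and (y'(x))²·R̃(y(x)) = 4κ̃·y(x)²·(1−y(x))² for all x ∈ I. Then for every x ∈ I (writing y = y(x)): (y''/(2y'))² − (d/dx)(y''/(2y')) − κ̃·(ρ₂y² + σ₂y)/R̃(y) = (κ̃·y²(1−y)²/R̃(y))·[ 1/(y²(1−y)²) + 2ρ̃/R̃(y) + (1−2y)(2ρ̃y+σ̃)/(y(1−y)R̃(y)) − 5(2ρ̃y+σ̃)²/(4R̃(y)²) ] − κ̃·(ρ₂y² + σ₂y)/R̃(y). -/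

import Mathlib

/-- The quadratic `R̃(t) = ρ̃t² + σ̃t + 1` of Iwata's second case. -/
def iwataR2 (ρt σt : ℝ) : ℝ → ℝ := fun t => ρt * t ^ 2 + σt * t + 1

/-!
Differentiating `y'² R̃(y) = 4κ̃ y²(1-y)²` once (and cancelling `y' ≠ 0`) and then once more
expresses `y''` and `y'''` through `y` and `y'`. For `q = y''/(2y')` one has
`q² - q' = (y'²/4) (3a² - 2y'''/y'³)` with `a = y''/y'²`, and both `a = P'/P - R̃'/(2R̃)` and
`y'''/y'³` are rational functions of `y` alone (`P = y(1-y)`); the identity `P'² + 4P = 1` then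
turns the result into the closed form.
-/

open Filter Topology

theorem HasDerivAt.iwataR2 {f : ℝ → ℝ} {f' x : ℝ} (ρ σ : ℝ) (hf : HasDerivAt f f' x) :
    HasDerivAt (fun t => iwataR2 ρ σ (f t)) ((2 * ρ * f x + σ) * f') x :=
  ((((hf.fun_pow 2).const_mul ρ).fun_add (hf.const_mul σ)).add_const 1).congr_deriv
    (by push_cast; ring)

theorem HasDerivAt.eq_zero_of_eventuallyEq_zero {f : ℝ → ℝ} {f' x : ℝ} (hf : HasDerivAt f f' x)
    (h : f =ᶠ[𝓝 x] 0) : f' = 0 :=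
  hf.unique ((hasDerivAt_const x 0).congr_of_eventuallyEq h)

theorem iwata_relation_deriv {ρ σ κ x y₂ : ℝ} {y y' : ℝ → ℝ}
    (hy : HasDerivAt y (y' x) x) (hy' : HasDerivAt y' y₂ x) (h₁ : y' x ≠ 0)
    (h : ∀ᶠ t in 𝓝 x, y' t ^ 2 * iwataR2 ρ σ (y t) = 4 * κ * y t ^ 2 * (1 - y t) ^ 2) :
    2 * y₂ * iwataR2 ρ σ (y x) + y' x ^ 2 * (2 * ρ * y x + σ)
      = 8 * κ * y x * (1 - y x) * (1 - 2 * y x) := by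
  have hF := ((hy'.fun_pow 2).fun_mul (hy.iwataR2 ρ σ)).sub
    (((hy.fun_pow 2).fun_mul ((hy.const_sub 1).fun_pow 2)).const_mul (4 * κ))
  have h0 := hF.eq_zero_of_eventuallyEq_zero <| h.mono fun t ht => by
    simp only [Pi.sub_apply, Pi.zero_apply]; linear_combination ht
  exact mul_left_cancel₀ h₁ (by linear_combination (norm := (push_cast; ring_nf)) h0)

theorem iwata_relation_deriv_deriv {ρ σ κ x y₃ : ℝ} {y y' y'' : ℝ → ℝ}
    (hy : HasDerivAt y (y' x) x) (hy' : HasDerivAt y' (y'' x) x) (hy'' : HasDerivAt y'' y₃ x)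
    (h : ∀ᶠ t in 𝓝 x, 2 * y'' t * iwataR2 ρ σ (y t) + y' t ^ 2 * (2 * ρ * y t + σ)
      = 8 * κ * y t * (1 - y t) * (1 - 2 * y t)) :
    2 * y₃ * iwataR2 ρ σ (y x) + 4 * y' x * y'' x * (2 * ρ * y x + σ) + 2 * ρ * y' x ^ 3
      = 8 * κ * y' x * (1 - 6 * y x + 6 * y x ^ 2) := by
  have hF := (((hy''.const_mul 2).fun_mul (hy.iwataR2 ρ σ)).add
    ((hy'.fun_pow 2).fun_mul ((hy.const_mul (2 * ρ)).add_const σ))).sub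
    (((hy.const_mul (8 * κ)).fun_mul (hy.const_sub 1)).fun_mul ((hy.const_mul 2).const_sub 1))
  have h0 := hF.eq_zero_of_eventuallyEq_zero <| h.mono fun t ht => by
    simp only [Pi.sub_apply, Pi.add_apply, Pi.zero_apply]; linear_combination ht
  linear_combination (norm := (push_cast; ring_nf)) h0

theorem iwata_potential_eq {ρ σ κ y₀ y₁ y₂ y₃ : ℝ} (h₁ : y₁ ≠ 0) (h0 : y₀ ≠ 0) (h1 : y₀ ≠ 1)
    (hR : iwataR2 ρ σ y₀ ≠ 0)
    (hA : y₁ ^ 2 * iwataR2 ρ σ y₀ = 4 * κ * y₀ ^ 2 * (1 - y₀) ^ 2)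
    (hB : 2 * y₂ * iwataR2 ρ σ y₀ + y₁ ^ 2 * (2 * ρ * y₀ + σ)
      = 8 * κ * y₀ * (1 - y₀) * (1 - 2 * y₀))
    (hC : 2 * y₃ * iwataR2 ρ σ y₀ + 4 * y₁ * y₂ * (2 * ρ * y₀ + σ) + 2 * ρ * y₁ ^ 3
      = 8 * κ * y₁ * (1 - 6 * y₀ + 6 * y₀ ^ 2)) :
    (y₂ / (2 * y₁)) ^ 2 - (y₃ * (2 * y₁) - y₂ * (2 * y₂)) / (2 * y₁) ^ 2
      = κ * y₀ ^ 2 * (1 - y₀) ^ 2 / iwataR2 ρ σ y₀ *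
          (1 / (y₀ ^ 2 * (1 - y₀) ^ 2) + 2 * ρ / iwataR2 ρ σ y₀
            + (1 - 2 * y₀) * (2 * ρ * y₀ + σ) / (y₀ * (1 - y₀) * iwataR2 ρ σ y₀)
            - 5 * (2 * ρ * y₀ + σ) ^ 2 / (4 * iwataR2 ρ σ y₀ ^ 2)) := by
  set R := iwataR2 ρ σ y₀
  have h1' : 1 - y₀ ≠ 0 := sub_ne_zero.mpr h1.symm
  have hκ : κ * y₀ ^ 2 * (1 - y₀) ^ 2 / R = y₁ ^ 2 / 4 := by
    field_simp; linear_combination -hA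
  have ha : y₂ / y₁ ^ 2 = (1 - 2 * y₀) / (y₀ * (1 - y₀)) - (2 * ρ * y₀ + σ) / (2 * R) := by
    field_simp
    linear_combination y₀ * (1 - y₀) * hB - 2 * (1 - 2 * y₀) * hA
  have hz : y₃ / y₁ ^ 3 = (1 - 6 * y₀ + 6 * y₀ ^ 2) / (y₀ ^ 2 * (1 - y₀) ^ 2)
      - 2 * (y₂ / y₁ ^ 2) * (2 * ρ * y₀ + σ) / R - ρ / R := by
    field_simp
    linear_combination y₀ ^ 2 * (1 - y₀) ^ 2 / 2 * hC - y₁ * (1 - 6 * y₀ + 6 * y₀ ^ 2) * hA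
  calc (y₂ / (2 * y₁)) ^ 2 - (y₃ * (2 * y₁) - y₂ * (2 * y₂)) / (2 * y₁) ^ 2
      = y₁ ^ 2 / 4 * (3 * (y₂ / y₁ ^ 2) ^ 2 - 2 * (y₃ / y₁ ^ 3)) := by
        field_simp; ring
    _ = _ := by
        rw [hκ, hz, ha]
        field_simp
        ring

theorem stmt_5 (ρt σt ρ₂ σ₂ κt : ℝ) (y : ℝ → ℝ) (I : Set ℝ) (hI : IsOpen I)
    (hy : ∀ x ∈ I, DifferentiableAt ℝ y x)
    (hy' : ∀ x ∈ I, DifferentiableAt ℝ (deriv y) x)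
    (hy'' : ∀ x ∈ I, DifferentiableAt ℝ (deriv (deriv y)) x)
    (hy0 : ∀ x ∈ I, deriv y x ≠ 0)
    (hy01 : ∀ x ∈ I, y x ≠ 0 ∧ y x ≠ 1)
    (hR : ∀ x ∈ I, iwataR2 ρt σt (y x) ≠ 0)
    (heq : ∀ x ∈ I, (deriv y x) ^ 2 * iwataR2 ρt σt (y x)
      = 4 * κt * (y x) ^ 2 * (1 - y x) ^ 2) :
    ∀ x ∈ I,
      (deriv (deriv y) x / (2 * deriv y x)) ^ 2
          - deriv (fun t => deriv (deriv y) t / (2 * deriv y t)) x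
          - κt * (ρ₂ * (y x) ^ 2 + σ₂ * y x) / iwataR2 ρt σt (y x)
        = (κt * (y x) ^ 2 * (1 - y x) ^ 2 / iwataR2 ρt σt (y x)) *
            (1 / ((y x) ^ 2 * (1 - y x) ^ 2) + 2 * ρt / iwataR2 ρt σt (y x)
              + (1 - 2 * y x) * (2 * ρt * y x + σt) / (y x * (1 - y x) * iwataR2 ρt σt (y x))
              - 5 * (2 * ρt * y x + σt) ^ 2 / (4 * (iwataR2 ρt σt (y x)) ^ 2))
          - κt * (ρ₂ * (y x) ^ 2 + σ₂ * y x) / iwataR2 ρt σt (y x) := by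
  intro x hx
  have hB : ∀ t ∈ I, 2 * deriv (deriv y) t * iwataR2 ρt σt (y t)
      + deriv y t ^ 2 * (2 * ρt * y t + σt) = 8 * κt * y t * (1 - y t) * (1 - 2 * y t) :=
    fun t ht => iwata_relation_deriv (hy t ht).hasDerivAt (hy' t ht).hasDerivAt (hy0 t ht)
      (eventually_of_mem (hI.mem_nhds ht) heq)
  have hC := iwata_relation_deriv_deriv (hy x hx).hasDerivAt (hy' x hx).hasDerivAt
    (hy'' x hx).hasDerivAt (eventually_of_mem (hI.mem_nhds hx) hB)
  have hq := (hy'' x hx).hasDerivAt.fun_div ((hy' x hx).hasDerivAt.const_mul 2)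
    (mul_ne_zero two_ne_zero (hy0 x hx))
  rw [hq.deriv, iwata_potential_eq (hy0 x hx) (hy01 x hx).1 (hy01 x hx).2 (hR x hx) (heq x hx)
    (hB x hx) hC]
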